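/- For t ∈ (0,1), the function F(t) = ((t^2-1)/(2t)) * ln((1+t)/(1-t)) + 1 equals the convergent series Σ_{n=1}^∞ 2 t^{2n}/(4n²-1). -/

import Mathlib

/-! With `L = Σ_{n ≥ 0} t^(2n+1)/(2n+1) = ½ log((1+t)/(1-t))`, the partial fraction
decomposition `2/(4m²-1) = 1/(2m-1) - 1/(2m+1)` splits the series into
`Σ_{m ≥ 1} t^(2m)/(2m-1) = t L` and `Σ_{m ≥ 1} t^(2m)/(2m+1) = (L - t)/t`,
whose difference is `(t² - 1)/t · L + 1 = F t`. -/

noncomputable def F (t : ℝ) : ℝ :=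
  ((t ^ 2 - 1) / (2 * t)) * Real.log ((1 + t) / (1 - t)) + 1

open Real

lemma hasSum_pow_odd_div {t : ℝ} (ht : |t| < 1) :
    HasSum (fun n : ℕ => t ^ (2 * n + 1) / (2 * n + 1)) (log ((1 + t) / (1 - t)) / 2) := by
  have h1 : 0 < 1 + t := by linarith [neg_abs_le t]
  have h2 : 0 < 1 - t := by linarith [le_abs_self t]
  rw [log_div h1.ne' h2.ne']
  refine ((hasSum_log_sub_log_of_abs_lt_one ht).div_const 2).congr_fun fun n => ?_
  ring

lemma two_div_four_sq_sub_one (n : ℕ) :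
    2 / (4 * ((n : ℝ) + 1) ^ 2 - 1) = 1 / (2 * n + 1) - 1 / (2 * (n + 1) + 1) := by
  have h : 4 * ((n : ℝ) + 1) ^ 2 - 1 = (2 * n + 1) * (2 * (n + 1) + 1) := by ring
  rw [h]
  field_simp
  ring

lemma hasSum_pow_even_div_pred {t : ℝ} (ht : |t| < 1) :
    HasSum (fun n : ℕ => t ^ (2 * (n + 1)) / (2 * n + 1))
      (t * (log ((1 + t) / (1 - t)) / 2)) :=
  ((hasSum_pow_odd_div ht).mul_left t).congr_fun fun n => by ring

lemma hasSum_pow_even_div_succ {t : ℝ} (ht0 : t ≠ 0) (ht : |t| < 1) :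
    HasSum (fun n : ℕ => t ^ (2 * (n + 1)) / (2 * (n + 1 : ℕ) + 1))
      ((log ((1 + t) / (1 - t)) / 2 - t) / t) := by
  have hshift := (hasSum_nat_add_iff' 1).mpr (hasSum_pow_odd_div ht)
  simp only [Finset.sum_range_one, mul_zero, zero_add, pow_one, Nat.cast_zero, div_one] at hshift
  refine (hshift.div_const t).congr_fun fun n => ?_
  rw [pow_succ, mul_div_right_comm, mul_div_cancel_right₀ _ ht0]

lemma F_hasSum_of_abs_lt_one {t : ℝ} (ht0 : t ≠ 0) (ht : |t| < 1) :
    HasSum (fun n : ℕ => 2 * t ^ (2 * (n + 1)) / (4 * ((n : ℝ) + 1) ^ 2 - 1)) (F t) := by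
  have hF : t * (log ((1 + t) / (1 - t)) / 2) - (log ((1 + t) / (1 - t)) / 2 - t) / t = F t := by
    unfold F
    field_simp
    ring
  refine hF ▸ ((hasSum_pow_even_div_pred ht).sub (hasSum_pow_even_div_succ ht0 ht)).congr_fun ?_
  intro n
  rw [mul_comm, mul_div_assoc, two_div_four_sq_sub_one]
  push_cast
  ring

theorem F_hasSum (t : ℝ) (ht0 : 0 < t) (ht1 : t < 1) :
    HasSum (fun n : ℕ => 2 * t ^ (2 * (n + 1)) / (4 * ((n : ℝ) + 1) ^ 2 - 1)) (F t) :=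
  F_hasSum_of_abs_lt_one ht0.ne' (abs_lt.mpr ⟨by linarith, ht1⟩)
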